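/- (Deterministic recovery bound for rank-constrained least squares.) Let p > 0, let M be an entrywise-nonnegative m×n real matrix of rank at most r, and let Y be any m×n real matrix. If M̂ minimizes ‖Y − pM'‖_F over all entrywise-nonnegative m×n matrices M' with rank(M') ≤ r, then ‖M̂ − M‖_F ≤ (2√(2r)/p)·‖Y − pM‖. -/

import Mathlib

open MeasureTheory ProbabilityTheory Real Matrix

/-- Frobenius norm of a real matrix. -/
noncomputable def frobNorm {m n : ℕ} (A : Matrix (Fin m) (Fin n) ℝ) : ℝ :=
  Real.sqrt (∑ i, ∑ j, (A i j)^2)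

/-- ℓ2→ℓ2 operator norm of a real matrix. -/
noncomputable def opNorm {m n : ℕ} (A : Matrix (Fin m) (Fin n) ℝ) : ℝ :=
  ‖LinearMap.toContinuousLinearMap (Matrix.toEuclideanLin A)‖

/-!
Write `E = Y - p M` and `D = M̂ - M`. Comparing `M̂` with the admissible `M` gives
`‖E - p D‖_F ≤ ‖E‖_F`, i.e. `p ‖D‖_F² ≤ 2 ⟨E, D⟩`. The columns of `D` lie in a subspace of
dimension `rank D ≤ 2r`; expanding them in an orthonormal basis `(uᵢ)` of it and applying
Cauchy–Schwarz gives `⟨E, D⟩² ≤ (∑ᵢ ‖Eᵀ uᵢ‖²) ‖D‖_F² ≤ 2r ‖E‖² ‖D‖_F²`.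
-/

open scoped RealInnerProductSpace

theorem Matrix.rank_sub_le {R m n : Type*} [Field R] [Fintype n] (A B : Matrix m n R) :
    (A - B).rank ≤ A.rank + B.rank := by
  have hrange : LinearMap.range (A - B).mulVecLin ≤
      LinearMap.range A.mulVecLin ⊔ LinearMap.range B.mulVecLin := by
    rintro _ ⟨x, rfl⟩
    rw [Matrix.mulVecLin_apply, sub_mulVec]
    exact sub_mem (Submodule.mem_sup_left ⟨x, rfl⟩) (Submodule.mem_sup_right ⟨x, rfl⟩)
  exact (Submodule.finrank_mono hrange).trans (Submodule.finrank_add_le_finrank_add_finrank _ _)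

section InnerProductSpace

variable {ι H K : Type*} [Fintype ι] [NormedAddCommGroup H] [InnerProductSpace ℝ H]
  [NormedAddCommGroup K] [InnerProductSpace ℝ K]

theorem sq_sum_inner_le_finrank_mul (W : Submodule ℝ K) [FiniteDimensional ℝ W] (e d : ι → K)
    (hd : ∀ j, d j ∈ W) {C : ℝ} (hC : ∀ u, ∑ j, ⟪e j, u⟫ ^ 2 ≤ C * ‖u‖ ^ 2) :
    (∑ j, ⟪e j, d j⟫) ^ 2 ≤ Module.finrank ℝ W * C * ∑ j, ‖d j‖ ^ 2 := by
  let v := stdOrthonormalBasis ℝ W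
  have hexpand : ∀ j, ⟪e j, d j⟫ = ∑ i, ⟪e j, v i⟫ * ⟪(v i : K), d j⟫ := by
    intro j
    have := congrArg (fun w : W => ⟪e j, (w : K)⟫) (v.sum_repr' ⟨d j, hd j⟩)
    simpa [Submodule.coe_sum, inner_sum, inner_smul_right, mul_comm] using this.symm
  have hparseval : ∀ j, ∑ i, ⟪(v i : K), d j⟫ ^ 2 = ‖d j‖ ^ 2 := fun j => by
    simpa using v.sum_sq_inner_right ⟨d j, hd j⟩
  have hframe : ∑ i, ∑ j, ⟪e j, v i⟫ ^ 2 ≤ Module.finrank ℝ W * C := by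
    calc ∑ i, ∑ j, ⟪e j, v i⟫ ^ 2 ≤ ∑ _i : Fin (Module.finrank ℝ W), C := by
          gcongr with i
          simpa [Submodule.norm_coe, v.orthonormal.1 i] using hC (v i)
      _ = Module.finrank ℝ W * C := by simp
  calc (∑ j, ⟪e j, d j⟫) ^ 2
      = (∑ q : ι × Fin (Module.finrank ℝ W), ⟪e q.1, v q.2⟫ * ⟪(v q.2 : K), d q.1⟫) ^ 2 := by
        simp only [hexpand, Fintype.sum_prod_type]
    _ ≤ (∑ q : ι × Fin (Module.finrank ℝ W), ⟪e q.1, v q.2⟫ ^ 2) *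
          ∑ q : ι × Fin (Module.finrank ℝ W), ⟪(v q.2 : K), d q.1⟫ ^ 2 :=
        Finset.sum_mul_sq_le_sq_mul_sq _ _ _
    _ ≤ Module.finrank ℝ W * C * ∑ j, ‖d j‖ ^ 2 := by
        rw [Fintype.sum_prod_type, Finset.sum_comm, Fintype.sum_prod_type]
        simp only [hparseval]
        exact mul_le_mul_of_nonneg_right hframe (by positivity)

theorem OrthonormalBasis.sum_inner_apply_sq_le [CompleteSpace H] [CompleteSpace K]
    (b : OrthonormalBasis ι ℝ H) (A : H →L[ℝ] K) (u : K) :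
    ∑ j, ⟪A (b j), u⟫ ^ 2 ≤ ‖A‖ ^ 2 * ‖u‖ ^ 2 := by
  simp_rw [← ContinuousLinearMap.adjoint_inner_right, b.sum_sq_inner_right,
    ← ContinuousLinearMap.adjoint.norm_map A, ← mul_pow]
  exact pow_le_pow_left₀ (norm_nonneg _) ((ContinuousLinearMap.adjoint A).le_opNorm u) 2

theorem OrthonormalBasis.sq_sum_inner_apply_le [FiniteDimensional ℝ H] [CompleteSpace K]
    (b : OrthonormalBasis ι ℝ H) (A B : H →L[ℝ] K) :
    (∑ j, ⟪A (b j), B (b j)⟫) ^ 2 ≤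
      Module.finrank ℝ (LinearMap.range (B : H →ₗ[ℝ] K)) * ‖A‖ ^ 2 * ∑ j, ‖B (b j)‖ ^ 2 :=
  sq_sum_inner_le_finrank_mul _ _ _ (fun j => LinearMap.mem_range_self (B : H →ₗ[ℝ] K) (b j))
    (b.sum_inner_apply_sq_le A)

end InnerProductSpace

def frobInner {m n : ℕ} (A B : Matrix (Fin m) (Fin n) ℝ) : ℝ :=
  ∑ i, ∑ j, A i j * B i j

theorem frobNorm_sq {m n : ℕ} (A : Matrix (Fin m) (Fin n) ℝ) :
    frobNorm A ^ 2 = ∑ i, ∑ j, A i j ^ 2 :=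
  Real.sq_sqrt (by positivity)

theorem frobNorm_nonneg {m n : ℕ} (A : Matrix (Fin m) (Fin n) ℝ) : 0 ≤ frobNorm A :=
  Real.sqrt_nonneg _

theorem opNorm_nonneg {m n : ℕ} (A : Matrix (Fin m) (Fin n) ℝ) : 0 ≤ opNorm A :=
  norm_nonneg _

theorem frobNorm_sub_smul_sq {m n : ℕ} (A B : Matrix (Fin m) (Fin n) ℝ) (p : ℝ) :
    frobNorm (A - p • B) ^ 2 = frobNorm A ^ 2 - 2 * p * frobInner A B + p ^ 2 * frobNorm B ^ 2 := by
  simp only [frobNorm_sq, frobInner, Matrix.sub_apply, Matrix.smul_apply, smul_eq_mul,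
    Finset.mul_sum, ← Finset.sum_sub_distrib, ← Finset.sum_add_distrib]
  exact Finset.sum_congr rfl fun i _ => Finset.sum_congr rfl fun j _ => by ring

theorem frobNorm_sq_eq_sum_norm_apply_sq {m n : ℕ} (A : Matrix (Fin m) (Fin n) ℝ) :
    frobNorm A ^ 2 = ∑ j, ‖LinearMap.toContinuousLinearMap (toEuclideanLin A)
      (EuclideanSpace.basisFun (Fin n) ℝ j)‖ ^ 2 := by
  rw [frobNorm_sq, Finset.sum_comm]
  simp [EuclideanSpace.norm_sq_eq, toLpLin_apply]

theorem frobInner_eq_sum_inner_apply {m n : ℕ} (A B : Matrix (Fin m) (Fin n) ℝ) :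
    frobInner A B = ∑ j, ⟪LinearMap.toContinuousLinearMap (toEuclideanLin A)
      (EuclideanSpace.basisFun (Fin n) ℝ j), LinearMap.toContinuousLinearMap (toEuclideanLin B)
      (EuclideanSpace.basisFun (Fin n) ℝ j)⟫ := by
  rw [frobInner, Finset.sum_comm]
  simp [PiLp.inner_apply, toLpLin_apply, mul_comm]

theorem rank_eq_finrank_range_toEuclideanLin {m n : ℕ} (A : Matrix (Fin m) (Fin n) ℝ) :
    A.rank = Module.finrank ℝ (LinearMap.range (toEuclideanLin A)) :=
  A.rank_eq_finrank_range_toLin (PiLp.basisFun 2 ℝ (Fin m)) (PiLp.basisFun 2 ℝ (Fin n))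

theorem frobInner_sq_le {m n : ℕ} (A B : Matrix (Fin m) (Fin n) ℝ) :
    frobInner A B ^ 2 ≤ B.rank * opNorm A ^ 2 * frobNorm B ^ 2 := by
  rw [frobInner_eq_sum_inner_apply, frobNorm_sq_eq_sum_norm_apply_sq,
    rank_eq_finrank_range_toEuclideanLin]
  exact (EuclideanSpace.basisFun (Fin n) ℝ).sq_sum_inner_apply_le _ _

theorem stmt5_general {m n r : ℕ} (p : ℝ) (hp : 0 < p)
    (M : Matrix (Fin m) (Fin n) ℝ) (hM : ∀ i j, 0 ≤ M i j) (hrank : M.rank ≤ r)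
    (Y : Matrix (Fin m) (Fin n) ℝ)
    (Mhat : Matrix (Fin m) (Fin n) ℝ)
    (hMhat_rank : Mhat.rank ≤ r)
    (hMhat_min : ∀ M' : Matrix (Fin m) (Fin n) ℝ, (∀ i j, 0 ≤ M' i j) → M'.rank ≤ r →
      frobNorm (Y - p • Mhat) ≤ frobNorm (Y - p • M')) :
    frobNorm (Mhat - M) ≤ 2 * Real.sqrt (2 * r) / p * opNorm (Y - p • M) := by
  set E := Y - p • M
  set D := Mhat - M
  have hfit : p ^ 2 * frobNorm D ^ 2 ≤ 2 * p * frobInner E D := by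
    have h : frobNorm (E - p • D) ^ 2 ≤ frobNorm E ^ 2 := by
      rw [show E - p • D = Y - p • Mhat by simp only [E, D, smul_sub]; abel]
      exact pow_le_pow_left₀ (frobNorm_nonneg _) (hMhat_min M hM hrank) 2
    rw [frobNorm_sub_smul_sq] at h
    linarith
  have hinner : frobInner E D ≤ √(2 * r) * opNorm E * frobNorm D := by
    have hrankD : (D.rank : ℝ) ≤ 2 * r := by
      exact_mod_cast (Mhat.rank_sub_le M).trans (by omega)
    refine le_of_sq_le_sq ?_
      (mul_nonneg (mul_nonneg (Real.sqrt_nonneg _) (opNorm_nonneg E)) (frobNorm_nonneg D))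
    calc frobInner E D ^ 2 ≤ D.rank * opNorm E ^ 2 * frobNorm D ^ 2 := frobInner_sq_le E D
      _ ≤ 2 * r * opNorm E ^ 2 * frobNorm D ^ 2 := by gcongr
      _ = (√(2 * r) * opNorm E * frobNorm D) ^ 2 := by
        rw [mul_pow, mul_pow, Real.sq_sqrt (by positivity)]
  have hscaled : p * frobNorm D ≤ 2 * (√(2 * r) * opNorm E) := by
    rcases (frobNorm_nonneg D).eq_or_lt with hzero | hpos
    · rw [← hzero, mul_zero]
      exact mul_nonneg zero_le_two (mul_nonneg (Real.sqrt_nonneg _) (opNorm_nonneg E))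
    · refine le_of_mul_le_mul_right ?_ (mul_pos hp hpos)
      nlinarith
  rw [div_mul_eq_mul_div, le_div_iff₀ hp]
  linarith

theorem stmt5 {m n r : ℕ} (p : ℝ) (hp : 0 < p)
    (M : Matrix (Fin m) (Fin n) ℝ) (hM : ∀ i j, 0 ≤ M i j) (hrank : M.rank ≤ r)
    (Y : Matrix (Fin m) (Fin n) ℝ)
    (Mhat : Matrix (Fin m) (Fin n) ℝ) (hMhat_pos : ∀ i j, 0 ≤ Mhat i j)
    (hMhat_rank : Mhat.rank ≤ r)
    (hMhat_min : ∀ M' : Matrix (Fin m) (Fin n) ℝ, (∀ i j, 0 ≤ M' i j) → M'.rank ≤ r →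
      frobNorm (Y - p • Mhat) ≤ frobNorm (Y - p • M')) :
    frobNorm (Mhat - M) ≤ 2 * Real.sqrt (2 * r) / p * opNorm (Y - p • M) :=
  stmt5_general p hp M hM hrank Y Mhat hMhat_rank hMhat_min
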